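/- Define F : ℕ → ℝ by F 1 = 0 and F m = (11/24) · 4^m − (3/2) · 2^m + 2/3 for m ≥ 2, and define G : ℕ → ℝ by G 2 = 2 and G m = (11/32) · 4^m − (5/4) · 2^m + 1 for m ≥ 3. Let s : ℕ → ℝ satisfy s 1 = 0; s n ≤ s (n/2) + 2 · F (n/2) + n/2 for all even n ≥ 2; and s n ≤ s ((n−1)/2) + G ((n+1)/2) + F ((n−1)/2) + (n−1)/2 for all odd n ≥ 3. Then for all n ≥ 1, s n ≤ (11/12) · 2^n. -/

import Mathlib

/-- `F m` bounds the C-NOT count for synthesizing an `m`-qubit unitary up to a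
diagonal matrix: `F 1 = 0` and `F m = (11/24)·4^m − (3/2)·2^m + 2/3` for `m ≥ 2`. -/
noncomputable def F (m : ℕ) : ℝ :=
  if m = 1 then 0 else (11 / 24 : ℝ) * 4 ^ m - (3 / 2 : ℝ) * 2 ^ m + 2 / 3

/-- `G m` bounds the C-NOT count for synthesizing an isometry from `ℂ^{2^{m−1}}` to
`ℂ^{2^m}` up to a diagonal matrix: `G 2 = 2` and
`G m = (11/32)·4^m − (5/4)·2^m + 1` for `m ≥ 3`. -/
noncomputable def G (m : ℕ) : ℝ :=
  if m = 2 then 2 else (11 / 32 : ℝ) * 4 ^ m - (5 / 4 : ℝ) * 2 ^ m + 1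

theorem spdmm_state_preparation_cnot_bound (s : ℕ → ℝ)
    (h1 : s 1 = 0)
    (heven : ∀ n, 2 ≤ n → Even n →
      s n ≤ s (n / 2) + 2 * F (n / 2) + ((n / 2 : ℕ) : ℝ))
    (hodd : ∀ n, 3 ≤ n → Odd n →
      s n ≤ s ((n - 1) / 2) + G ((n + 1) / 2) + F ((n - 1) / 2) + (((n - 1) / 2 : ℕ) : ℝ)) :
    ∀ n, 1 ≤ n → s n ≤ (11 / 12 : ℝ) * 2 ^ n := by
  intro n
  induction n using Nat.strong_induction_on with
  | _ n ih =>
    intro hn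
    match n, hn with
    | 1, _ => rw [h1]; norm_num
    | 2, _ =>
      have h := heven 2 le_rfl (by decide)
      simp only [F, show (2/2 : ℕ) = 1 from rfl] at h
      simp at h
      rw [h1] at h
      norm_num at h ⊢
      linarith
    | 3, _ =>
      have h := hodd 3 le_rfl (by decide)
      norm_num [F, G] at h
      rw [h1] at h
      norm_num
      linarith
    | (n+4), _ =>
      set N := n + 4 with hN
      have hN4 : 4 ≤ N := by omega
      rcases Nat.even_or_odd N with he | ho
      · obtain ⟨m, hm⟩ := he
        have hmN : N = 2 * m := by omega
        have hm2 : 2 ≤ m := by omega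
        have hdiv : N / 2 = m := by omega
        have h := heven N (by omega) ⟨m, hm⟩
        rw [hdiv] at h
        have hih := ih m (by omega) (by omega)
        have hF : F m = (11 / 24 : ℝ) * 4 ^ m - (3 / 2 : ℝ) * 2 ^ m + 2 / 3 := by
          simp [F, show m ≠ 1 by omega]
        have hmb : (m : ℝ) ≤ 2 ^ m := by
          exact_mod_cast (Nat.lt_two_pow_self (n := m)).le
        have h2m : (4 : ℝ) ≤ 2 ^ m := by
          calc (4:ℝ) = 2^2 := by norm_num
          _ ≤ 2 ^ m := by apply pow_le_pow_right₀ <;> norm_num [hm2]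
        have hpow : (2 : ℝ) ^ N = (2 ^ m) ^ 2 := by
          rw [hmN, pow_mul']
        have hpow4 : (4 : ℝ) ^ m = (2 ^ m) ^ 2 := by
          rw [show (4:ℝ) = 2^2 by norm_num, ← pow_mul, ← pow_mul']
        rw [hF] at h
        rw [hpow]
        nlinarith [h, hih, hmb, h2m, hpow4]
      · obtain ⟨m, hm⟩ := ho
        have hm2 : 2 ≤ m := by omega
        have hdiv : (N - 1) / 2 = m := by omega
        have hdiv2 : (N + 1) / 2 = m + 1 := by omega
        have h := hodd N (by omega) ⟨m, hm⟩
        rw [hdiv, hdiv2] at h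
        have hih := ih m (by omega) (by omega)
        have hF : F m = (11 / 24 : ℝ) * 4 ^ m - (3 / 2 : ℝ) * 2 ^ m + 2 / 3 := by
          simp [F, show m ≠ 1 by omega]
        have hG : G (m+1) = (11 / 32 : ℝ) * 4 ^ (m+1) - (5 / 4 : ℝ) * 2 ^ (m+1) + 1 := by
          simp [G, show m + 1 ≠ 2 by omega]
        have hmb : (m : ℝ) ≤ 2 ^ m := by
          exact_mod_cast (Nat.lt_two_pow_self (n := m)).le
        have h2m : (4 : ℝ) ≤ 2 ^ m := by
          calc (4:ℝ) = 2^2 := by norm_num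
          _ ≤ 2 ^ m := by apply pow_le_pow_right₀ <;> norm_num [hm2]
        have hpow : (2 : ℝ) ^ N = 2 * (2 ^ m) ^ 2 := by
          rw [hm, pow_succ, pow_mul']; ring
        have hpow4 : (4 : ℝ) ^ m = (2 ^ m) ^ 2 := by
          rw [show (4:ℝ) = 2^2 by norm_num, ← pow_mul, ← pow_mul']
        have hpow4' : (4 : ℝ) ^ (m+1) = 4 * (2 ^ m) ^ 2 := by
          rw [pow_succ, hpow4]; ring
        have hpow2' : (2 : ℝ) ^ (m+1) = 2 * 2 ^ m := by rw [pow_succ]; ring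
        rw [hF, hG, hpow4', hpow2'] at h
        rw [hpow]
        nlinarith [h, hih, hmb, h2m, hpow4]
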